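/- Let f(x)=x·sin(log x) for x∈(0,1], f(0)=0, and λ Lebesgue measure on [0,1]. Then the game ν=f∘λ is a Lipschitz game (f is Lipschitz on [0,1]), but ν is not Burkill–Cesari integrable with respect to any mesh δ_μ, μ∈NA⁺, because lim_{x→0⁺} f(x)/x = lim_{x→0⁺} sin(log x) does not exist. -/

import Mathlib

open MeasureTheory Set

def Nonatomic {Ω : Type*} [MeasurableSpace Ω] (P : Measure Ω) : Prop :=
  ∀ A : Set Ω, MeasurableSet A → 0 < P A →
    ∃ B : Set Ω, MeasurableSet B ∧ B ⊆ A ∧ 0 < P B ∧ P B < P A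

def IsPartition {Ω : Type*} [MeasurableSpace Ω] (D : Finset (Set Ω)) (E : Set Ω) : Prop :=
  (∀ I ∈ D, MeasurableSet I) ∧ ((D : Set (Set Ω)).PairwiseDisjoint id) ∧
    ⋃₀ (D : Set (Set Ω)) = E

/-- `f(x) = x sin(log x)` for `x ∈ (0,1]`, `f(0) = 0` (note `Real.log 0 = 0`,
`Real.sin 0 = 0`, so the formula already gives `f 0 = 0`). -/
noncomputable def fLog (x : ℝ) : ℝ := x * Real.sin (Real.log x)

/-!
On `(0, ∞)` we have `fLog' = sin ∘ log + cos ∘ log`, so `fLog` is `2`-Lipschitz on `[0, ∞)` and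
the game `fLog ∘ λ` is dominated by the atomless measure `2 • λ`.

Chopping `(0, 1]` into `⌊1/x⌋` intervals of length `x` and a remainder of length `r < x` gives
the Riemann sum `(1 - r) sin (log x) + fLog r`, which is within `2x` of `sin (log x) = fLog x / x`.
A finite atomless measure `μ` on `ℝ` has a continuous distribution function, hence gives uniformly
small mass to short subintervals of `[0, 1]`; so these partitions have arbitrarily small `μ`-mesh
as `x → 0`. Taking `x` with `sin (log x) = 1` and with `sin (log x) = -1` produces Riemann sums of
arbitrarily fine mesh near `1` and near `-1`, so they have no limit.
-/

open Filter Topology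
open scoped NNReal

theorem abs_fLog_le (x : ℝ) : |fLog x| ≤ |x| := by
  rw [fLog, abs_mul]
  exact mul_le_of_le_one_right (abs_nonneg x) (Real.abs_sin_le_one _)

theorem hasDerivAt_fLog {x : ℝ} (hx : x ≠ 0) :
    HasDerivAt fLog (Real.sin (Real.log x) + Real.cos (Real.log x)) x := by
  have h : HasDerivAt (fun y => y * Real.sin (Real.log y))
      (1 * Real.sin (Real.log x) + x * (Real.cos (Real.log x) * x⁻¹)) x :=
    (hasDerivAt_id' x).mul (Real.hasDerivAt_log hx).sin
  rwa [one_mul, mul_left_comm, mul_inv_cancel₀ hx, mul_one] at h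

theorem continuous_fLog : Continuous fLog := by
  refine continuous_iff_continuousAt.2 fun x => ?_
  rcases eq_or_ne x 0 with rfl | hx
  · have h0 : fLog 0 = 0 := by simp [fLog]
    rw [ContinuousAt, h0]
    exact squeeze_zero_norm abs_fLog_le (continuous_abs.tendsto' 0 0 abs_zero)
  · exact (hasDerivAt_fLog hx).continuousAt

theorem lipschitzOnWith_fLog : LipschitzOnWith 2 fLog (Ici 0) := by
  rw [← closure_Ioi]
  refine LipschitzOnWith.closure continuous_fLog.continuousOn <|
    (convex_Ioi 0).lipschitzOnWith_of_nnnorm_hasDerivWithin_le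
      (fun x hx => (hasDerivAt_fLog (ne_of_gt hx)).hasDerivWithinAt) fun x _ => ?_
  rw [← NNReal.coe_le_coe, coe_nnnorm, Real.norm_eq_abs]
  calc |Real.sin (Real.log x) + Real.cos (Real.log x)|
      ≤ |Real.sin (Real.log x)| + |Real.cos (Real.log x)| := abs_add_le _ _
    _ ≤ 1 + 1 := add_le_add (Real.abs_sin_le_one _) (Real.abs_cos_le_one _)
    _ = (2 : ℝ≥0) := by norm_num

theorem Nonatomic.nullSingletonClass {Ω : Type*} [MeasurableSpace Ω] [MeasurableSingletonClass Ω]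
    {μ : Measure Ω} (h : Nonatomic μ) : NullSingletonClass μ := by
  refine ⟨fun x => ?_⟩
  by_contra hx
  obtain ⟨B, -, hB, hB0, hBlt⟩ := h {x} (measurableSet_singleton x) (pos_iff_ne_zero.2 hx)
  rcases subset_singleton_iff_eq.1 hB with rfl | rfl
  · simp at hB0
  · exact hBlt.false

theorem LipschitzOnWith.abs_sub_comp_measureReal_le {f : ℝ → ℝ} {K : ℝ≥0}
    (hf : LipschitzOnWith K f (Ici 0)) {Ω : Type*} [MeasurableSpace Ω] (ν : Measure Ω)
    [IsFiniteMeasure ν] {S T : Set Ω} (hST : S ⊆ T) :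
    |f (ν.real T) - f (ν.real S)| ≤ (K • ν).real T - (K • ν).real S := by
  have h := hf.dist_le_mul (ν.real T) measureReal_nonneg (ν.real S) measureReal_nonneg
  rwa [Real.dist_eq, Real.dist_eq, abs_of_nonneg (sub_nonneg.2 (measureReal_mono hST)),
    mul_sub, ← measureReal_nnreal_smul_apply, ← measureReal_nnreal_smul_apply] at h

instance nullSingletonClass_nnreal_smul {Ω : Type*} [MeasurableSpace Ω] (c : ℝ≥0)
    (μ : Measure Ω) [NullSingletonClass μ] : NullSingletonClass (c • μ) :=
  ⟨fun x => by simp⟩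

section FiniteMeasure

variable (μ : Measure ℝ) [IsFiniteMeasure μ]

theorem measureReal_Iic_add_measureReal_Ioc {a b : ℝ} (hab : a ≤ b) :
    μ.real (Iic a) + μ.real (Ioc a b) = μ.real (Iic b) := by
  rw [← measureReal_union (Iic_disjoint_Ioc le_rfl) measurableSet_Ioc, Iic_union_Ioc_eq_Iic hab]

theorem tendsto_measure_Iic_atBot : Tendsto (fun x => μ (Iic x)) atBot (𝓝 0) := by
  have h := tendsto_measure_iInter_atBot (μ := μ) (fun x => measurableSet_Iic.nullMeasurableSet)
    (monotone_Iic (α := ℝ)) ⟨0, measure_ne_top μ _⟩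
  rwa [iInter_Iic_eq_empty_iff.2 (by simp), measure_empty] at h

variable [NullSingletonClass μ]

theorem continuous_measureReal_Iic : Continuous fun t => μ.real (Iic t) := by
  refine continuous_iff_continuousAt.2 fun t => ?_
  have hball : Tendsto (fun s => μ.real (Metric.closedBall t (dist s t))) (𝓝 t) (𝓝 0) := by
    have h := tendsto_measure_cthickening_of_isClosed (μ := μ) ⟨1, one_pos, measure_ne_top μ _⟩
      (isClosed_singleton (x := t))
    rw [measure_singleton] at h
    have hdist : Tendsto (fun s => dist s t) (𝓝 t) (𝓝 0) :=
      (continuous_id.dist continuous_const).tendsto' t 0 (dist_self t)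
    simpa [Metric.cthickening_singleton t dist_nonneg, Function.comp_def, Measure.real] using
      (ENNReal.tendsto_toReal ENNReal.zero_ne_top).comp (h.comp hdist)
  have hle : ∀ s, dist (μ.real (Iic s)) (μ.real (Iic t)) ≤
      μ.real (Metric.closedBall t (dist s t)) := by
    intro s
    rw [Real.dist_eq, Real.dist_eq, Real.closedBall_eq_Icc]
    rcases le_total s t with h | h
    · rw [← measureReal_Iic_add_measureReal_Ioc μ h, sub_add_cancel_left, abs_neg,
        abs_of_nonneg measureReal_nonneg]
      exact measureReal_mono (Ioc_subset_Icc_self.trans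
        (Icc_subset_Icc (by linarith [neg_abs_le (s - t)]) (by linarith [abs_nonneg (s - t)])))
    · rw [← measureReal_Iic_add_measureReal_Ioc μ h, add_sub_cancel_left,
        abs_of_nonneg measureReal_nonneg]
      exact measureReal_mono (Ioc_subset_Icc_self.trans
        (Icc_subset_Icc (by linarith [abs_nonneg (s - t)]) (by linarith [le_abs_self (s - t)])))
  exact tendsto_iff_dist_tendsto_zero.2 (squeeze_zero (fun _ => dist_nonneg) hle hball)

theorem exists_pos_forall_measureReal_Ioc_lt {K : Set ℝ} (hK : IsCompact K) {δ : ℝ}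
    (hδ : 0 < δ) : ∃ η > 0, ∀ a ∈ K, ∀ b ∈ K, b - a < η → μ.real (Ioc a b) < δ := by
  obtain ⟨η, hη, h⟩ := Metric.uniformContinuousOn_iff.1
    (hK.uniformContinuousOn_of_continuous (continuous_measureReal_Iic μ).continuousOn) δ hδ
  refine ⟨η, hη, fun a ha b hb hab => ?_⟩
  rcases le_or_gt a b with hle | hlt
  · have := h b hb a ha (by rwa [Real.dist_eq, abs_of_nonneg (sub_nonneg.2 hle)])
    rwa [Real.dist_eq, ← measureReal_Iic_add_measureReal_Ioc μ hle, add_sub_cancel_left,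
      abs_of_nonneg measureReal_nonneg] at this
  · rwa [Ioc_eq_empty_of_le hlt.le, measureReal_empty]

theorem nonatomic_of_nullSingletonClass : Nonatomic μ := by
  intro A hA hApos
  have hAreal : 0 < μ.real A := ENNReal.toReal_pos hApos.ne' (measure_ne_top μ A)
  obtain ⟨t, ht⟩ : μ.real A / 2 ∈ range fun t => (μ.restrict A).real (Iic t) := by
    refine mem_range_of_exists_le_of_exists_ge (continuous_measureReal_Iic _) ?_ ?_
    · have h := (ENNReal.tendsto_toReal ENNReal.zero_ne_top).comp
        (tendsto_measure_Iic_atBot (μ.restrict A))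
      exact (h.eventually_le_const (half_pos hAreal)).exists
    · have h := (ENNReal.tendsto_toReal (measure_ne_top _ _)).comp
        (tendsto_measure_Iic_atTop (μ.restrict A))
      rw [Measure.restrict_apply_univ] at h
      exact (h.eventually_const_le (half_lt_self hAreal)).exists
  simp only [measureReal_restrict_apply measurableSet_Iic] at ht
  refine ⟨Iic t ∩ A, measurableSet_Iic.inter hA, inter_subset_right, ?_, ?_⟩
  · exact (ENNReal.toReal_pos_iff.1 (ht ▸ half_pos hAreal : 0 < μ.real (Iic t ∩ A))).1
  · exact (ENNReal.toReal_lt_toReal (measure_ne_top _ _) (measure_ne_top _ _)).1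
      (ht ▸ half_lt_self hAreal : μ.real (Iic t ∩ A) < μ.real A)

end FiniteMeasure

theorem isPartition_image_Ioc {t : ℕ → ℝ} (ht : Monotone t) (n : ℕ) :
    IsPartition ((Finset.range n).image fun i => Ioc (t i) (t (i + 1))) (Ioc (t 0) (t n)) := by
  refine ⟨?_, ?_, ?_⟩
  · simp only [Finset.mem_image]
    rintro _ ⟨i, -, rfl⟩
    exact measurableSet_Ioc
  · rw [Finset.coe_image]
    rintro _ ⟨i, -, rfl⟩ _ ⟨j, -, rfl⟩ hij
    exact ht.pairwise_disjoint_on_Ioc_succ (ne_of_apply_ne (fun i => Ioc (t i) (t (i + 1))) hij)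
  · rw [Finset.coe_image, sUnion_image, Finset.set_biUnion_coe]
    refine Subset.antisymm (iUnion₂_subset fun i hi => Ioc_subset_Ioc (ht (Nat.zero_le i))
      (ht (Finset.mem_range.1 hi))) (Ioc_subset_biUnion_Ioc n t)

theorem measureReal_restrict_Icc_Ioc {a b c d : ℝ} (hca : c ≤ a) (hab : a ≤ b) (hbd : b ≤ d) :
    (volume.restrict (Icc c d)).real (Ioc a b) = b - a := by
  rw [measureReal_restrict_apply measurableSet_Ioc,
    inter_eq_self_of_subset_left (Ioc_subset_Icc_self.trans (Icc_subset_Icc hca hbd)),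
    Real.volume_real_Ioc_of_le hab]

def unitGrid (x : ℝ) (i : ℕ) : ℝ := min (i * x) 1

section unitGrid

variable {x : ℝ}

theorem monotone_unitGrid (hx : 0 ≤ x) : Monotone (unitGrid x) := fun _ _ hij =>
  min_le_min_right 1 (mul_le_mul_of_nonneg_right (Nat.cast_le.2 hij) hx)

theorem unitGrid_mem_Icc (hx : 0 ≤ x) (i : ℕ) : unitGrid x i ∈ Icc (0 : ℝ) 1 :=
  ⟨le_min (by positivity) zero_le_one, min_le_right _ _⟩

theorem unitGrid_succ_sub_le (hx : 0 ≤ x) (i : ℕ) : unitGrid x (i + 1) - unitGrid x i ≤ x := by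
  simp only [unitGrid, Nat.cast_succ]
  rcases le_total (i * x) 1 with h | h
  · rw [min_eq_left h]
    linarith [min_le_left ((i + 1) * x) 1]
  · rw [min_eq_right h, min_eq_right (by nlinarith)]
    linarith

theorem unitGrid_of_le {i : ℕ} (hi : i ≤ ⌊1 / x⌋₊) (hx : 0 < x) : unitGrid x i = i * x := by
  refine min_eq_left ?_
  calc (i : ℝ) * x ≤ ⌊1 / x⌋₊ * x := by gcongr
    _ ≤ 1 / x * x := by gcongr; exact Nat.floor_le (by positivity)
    _ = 1 := by field_simp

theorem unitGrid_floor_add_one (hx : 0 < x) : unitGrid x (⌊1 / x⌋₊ + 1) = 1 := by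
  refine min_eq_right ?_
  have := Nat.lt_floor_add_one (1 / x)
  rw [div_lt_iff₀ hx] at this
  push_cast
  linarith

theorem sum_range_unitGrid (g : ℝ → ℝ) (hx : 0 < x) :
    ∑ i ∈ Finset.range (⌊1 / x⌋₊ + 1), g (unitGrid x (i + 1) - unitGrid x i) =
      ⌊1 / x⌋₊ * g x + g (1 - ⌊1 / x⌋₊ * x) := by
  have hstep : ∀ i < ⌊1 / x⌋₊, unitGrid x (i + 1) - unitGrid x i = x := by
    intro i hi
    rw [unitGrid_of_le hi hx, unitGrid_of_le hi.le hx]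
    push_cast
    ring
  rw [Finset.sum_range_succ, unitGrid_floor_add_one hx, unitGrid_of_le le_rfl hx,
    Finset.sum_congr rfl fun i hi => congrArg g (hstep i (Finset.mem_range.1 hi)),
    Finset.sum_const, Finset.card_range, nsmul_eq_mul]

end unitGrid

theorem exists_isPartition_sum_fLog_near_sin_log {x : ℝ} (hx : 0 < x) :
    ∃ D : Finset (Set ℝ), IsPartition D (Ioc 0 1) ∧
      (∀ I ∈ D, ∃ a ∈ Icc (0 : ℝ) 1, ∃ b ∈ Icc (0 : ℝ) 1, b - a ≤ x ∧ I = Ioc a b) ∧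
      |∑ I ∈ D, fLog ((volume.restrict (Icc (0 : ℝ) 1)).real I) - Real.sin (Real.log x)|
        < 2 * x := by
  have ht := monotone_unitGrid hx.le
  refine ⟨(Finset.range (⌊1 / x⌋₊ + 1)).image fun i => Ioc (unitGrid x i) (unitGrid x (i + 1)),
    ?_, ?_, ?_⟩
  · have h := isPartition_image_Ioc ht (⌊1 / x⌋₊ + 1)
    rwa [unitGrid_floor_add_one hx, show unitGrid x 0 = 0 by simp [unitGrid]] at h
  · simp only [Finset.mem_image]
    rintro _ ⟨i, -, rfl⟩
    exact ⟨_, unitGrid_mem_Icc hx.le i, _, unitGrid_mem_Icc hx.le (i + 1),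
      unitGrid_succ_sub_le hx.le i, rfl⟩
  have hdisj : ((Finset.range (⌊1 / x⌋₊ + 1) : Finset ℕ) : Set ℕ).PairwiseDisjoint
      fun i => Ioc (unitGrid x i) (unitGrid x (i + 1)) :=
    ht.pairwise_disjoint_on_Ioc_succ.set_pairwise _
  rw [Finset.sum_image_of_disjoint (by simp [fLog]) hdisj,
    Finset.sum_congr rfl fun i _ => by
      rw [measureReal_restrict_Icc_Ioc (unitGrid_mem_Icc hx.le i).1 (ht (Nat.le_succ i))
        (unitGrid_mem_Icc hx.le (i + 1)).2],
    sum_range_unitGrid fLog hx]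
  set r := 1 - ⌊1 / x⌋₊ * x with hr
  have hr0 : 0 ≤ r := by
    have := Nat.floor_le (one_div_pos.2 hx).le
    rw [le_div_iff₀ hx] at this
    linarith
  have hrx : r < x := by
    have := Nat.lt_floor_add_one (1 / x)
    rw [div_lt_iff₀ hx] at this
    linarith
  calc |⌊1 / x⌋₊ * fLog x + fLog r - Real.sin (Real.log x)|
      = |fLog r - r * Real.sin (Real.log x)| := by rw [fLog, hr]; ring_nf
    _ ≤ |fLog r| + |r * Real.sin (Real.log x)| := abs_sub _ _
    _ ≤ r + r := by
      rw [abs_mul, abs_of_nonneg hr0]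
      exact add_le_add ((abs_fLog_le r).trans_eq (abs_of_nonneg hr0))
        (mul_le_of_le_one_right hr0 (Real.abs_sin_le_one _))
    _ < 2 * x := by linarith

theorem exists_lt_sin_log_eq (v : ℝ) {c : ℝ} (hc : 0 < c) :
    ∃ x, 0 < x ∧ x < c ∧ Real.sin (Real.log x) = Real.sin v := by
  obtain ⟨k, hk⟩ := exists_nat_gt ((v - Real.log c) / (2 * Real.pi))
  rw [div_lt_iff₀ Real.two_pi_pos] at hk
  refine ⟨Real.exp (v - k * (2 * Real.pi)), Real.exp_pos _, ?_, ?_⟩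
  · rw [← Real.exp_log hc, Real.exp_lt_exp]
    linarith
  · rw [Real.log_exp, Real.sin_sub_nat_mul_two_pi]

theorem exists_isPartition_sum_fLog_near_sin (v : ℝ) {η ε : ℝ} (hη : 0 < η) (hε : 0 < ε) :
    ∃ D : Finset (Set ℝ), IsPartition D (Ioc 0 1) ∧
      (∀ I ∈ D, ∃ a ∈ Icc (0 : ℝ) 1, ∃ b ∈ Icc (0 : ℝ) 1, b - a < η ∧ I = Ioc a b) ∧
      |∑ I ∈ D, fLog ((volume.restrict (Icc (0 : ℝ) 1)).real I) - Real.sin v| < ε := by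
  obtain ⟨x, hx, hxc, hsin⟩ := exists_lt_sin_log_eq v (lt_min hη (half_pos hε))
  obtain ⟨D, hD, hmesh, hsum⟩ := exists_isPartition_sum_fLog_near_sin_log hx
  refine ⟨D, hD, fun I hI => ?_, ?_⟩
  · obtain ⟨a, ha, b, hb, hab, rfl⟩ := hmesh I hI
    exact ⟨a, ha, b, hb, hab.trans_lt (hxc.trans_le (min_le_left _ _)), rfl⟩
  · rw [← hsin]
    linarith [min_le_right η (ε / 2)]

/-- The game `ν = fLog ∘ λ` (λ Lebesgue on `[0,1]`) is a Lipschitz game, but is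
not Burkill–Cesari integrable w.r.t. any mesh `δ_μ`, `μ ∈ NA⁺`. -/
theorem stmt18 :
    (∃ μ : Measure ℝ, IsFiniteMeasure μ ∧ Nonatomic μ ∧
      (∀ S T : Set ℝ, MeasurableSet S → MeasurableSet T → S ⊆ T →
        |fLog (((volume.restrict (Set.Icc (0 : ℝ) 1)) T).toReal) -
          fLog (((volume.restrict (Set.Icc (0 : ℝ) 1)) S).toReal)| ≤
          (μ T).toReal - (μ S).toReal)) ∧
    (∀ μ : Measure ℝ, IsFiniteMeasure μ → Nonatomic μ →
      ¬ ∃ L : Set ℝ → ℝ, ∀ F : Set ℝ, MeasurableSet F → ∀ ε > 0, ∃ δ > 0,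
        ∀ D : Finset (Set ℝ), IsPartition D F → (∀ I ∈ D, (μ I).toReal < δ) →
          |(∑ I ∈ D, fLog (((volume.restrict (Set.Icc (0 : ℝ) 1)) I).toReal)) -
            L F| < ε) := by
  refine ⟨⟨(2 : ℝ≥0) • volume.restrict (Icc 0 1), inferInstance, nonatomic_of_nullSingletonClass _,
    fun S T _ _ hST => lipschitzOnWith_fLog.abs_sub_comp_measureReal_le _ hST⟩, ?_⟩
  rintro μ _ hμ ⟨L, hL⟩
  have := hμ.nullSingletonClass
  obtain ⟨δ, hδ, hRiemann⟩ := hL (Ioc 0 1) measurableSet_Ioc (1 / 2) one_half_pos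
  obtain ⟨η, hη, hsmall⟩ :=
    exists_pos_forall_measureReal_Ioc_lt μ (isCompact_Icc (a := 0) (b := 1)) hδ
  have hsum : ∀ v, ∃ s, |s - Real.sin v| < 1 / 4 ∧ |s - L (Ioc 0 1)| < 1 / 2 := by
    intro v
    obtain ⟨D, hD, hmesh, hnear⟩ :=
      exists_isPartition_sum_fLog_near_sin v hη (ε := 1 / 4) (by norm_num)
    refine ⟨_, hnear, hRiemann D hD fun I hI => ?_⟩
    obtain ⟨a, ha, b, hb, hab, rfl⟩ := hmesh I hI
    exact hsmall a ha b hb hab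
  obtain ⟨s₁, h₁, h₁'⟩ := hsum (Real.pi / 2)
  obtain ⟨s₂, h₂, h₂'⟩ := hsum (-(Real.pi / 2))
  rw [Real.sin_pi_div_two] at h₁
  rw [Real.sin_neg, Real.sin_pi_div_two] at h₂
  rw [abs_lt] at h₁ h₁' h₂ h₂'
  linarith
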